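/- arXiv:2112.10601 — 7 statements merged into one kernel-verified Lean document; each statement's English description precedes it below -/
import Mathlib

section
/- Let $(e_n)_{n\geq 0}$ be a sequence of nonnegative reals satisfying $e_0 = 0$ and $e_n \leq a\,\tau\,\log(n+1) + b\,\tau \sum_{k=0}^{n-1} e_k$ for all $n$ with $n\tau \leq t_{\max}$, where $a,b,\tau > 0$. Then $e_n \leq a\, e^{b\, t_{\max}} \log(n+1)\,\tau$ for all such $n$. -/
/-- Discrete Gronwall inequality: if `e 0 = 0`, `e n ≥ 0`, and
`e n ≤ a τ log(n+1) + b τ ∑_{k<n} e k` for all `n` with `n τ ≤ t_max`, then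
`e n ≤ a e^{b t_max} log(n+1) τ` for all such `n`. -/
theorem stmt2 (e : ℕ → ℝ) (a b τ tmax : ℝ)
    (ha : 0 < a) (hb : 0 < b) (hτ : 0 < τ) (htmax : 0 < tmax)
    (he0 : e 0 = 0) (henn : ∀ n, 0 ≤ e n)
    (hrec : ∀ n : ℕ, (n : ℝ) * τ ≤ tmax →
      e n ≤ a * τ * Real.log (n + 1) + b * τ * ∑ k ∈ Finset.range n, e k) :
    ∀ n : ℕ, (n : ℝ) * τ ≤ tmax →
      e n ≤ a * Real.exp (b * tmax) * Real.log (n + 1) * τ := by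
  have hbτ : 0 < b * τ := mul_pos hb hτ
  have key : ∀ n : ℕ, (n : ℝ) * τ ≤ tmax →
      e n ≤ a * τ * Real.log (n + 1) * (1 + b * τ) ^ n := by
    intro n
    induction n using Nat.strong_induction_on with
    | _ n IH =>
      intro hn
      have hLn : 0 ≤ Real.log ((n : ℝ) + 1) :=
        Real.log_nonneg (by have := (n.cast_nonneg : (0:ℝ) ≤ n); linarith)
      have hsum : ∑ k ∈ Finset.range n, e k ≤
          ∑ k ∈ Finset.range n, a * τ * Real.log (n + 1) * (1 + b * τ) ^ k := by
        apply Finset.sum_le_sum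
        intro k hk
        have hk' := Finset.mem_range.mp hk
        have hkτ : (k : ℝ) * τ ≤ tmax := by
          refine le_trans ?_ hn
          have : (k : ℝ) ≤ n := by exact_mod_cast hk'.le
          nlinarith
        calc e k ≤ a * τ * Real.log (k + 1) * (1 + b * τ) ^ k := IH k hk' hkτ
          _ ≤ a * τ * Real.log (n + 1) * (1 + b * τ) ^ k := by
              have hlog : Real.log ((k : ℝ) + 1) ≤ Real.log ((n : ℝ) + 1) := by
                apply Real.log_le_log (by positivity)
                have : (k : ℝ) ≤ n := by exact_mod_cast hk'.le
                linarith
              have hpow : (0:ℝ) ≤ (1 + b * τ) ^ k := by positivity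
              have h1 : a * τ * Real.log (k + 1) ≤ a * τ * Real.log (n + 1) :=
                mul_le_mul_of_nonneg_left hlog (by positivity)
              exact mul_le_mul_of_nonneg_right h1 hpow
      have hgeom : ∑ k ∈ Finset.range n, (1 + b * τ) ^ k
          = ((1 + b * τ) ^ n - 1) / (b * τ) := by
        rw [geom_sum_eq (by nlinarith : (1 : ℝ) + b * τ ≠ 1)]
        ring_nf
      calc e n ≤ a * τ * Real.log (n + 1) + b * τ * ∑ k ∈ Finset.range n, e k :=
            hrec n hn
        _ ≤ a * τ * Real.log (n + 1) +
            b * τ * (a * τ * Real.log (n + 1) * (((1 + b * τ) ^ n - 1) / (b * τ))) := by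
            have h2 : ∑ k ∈ Finset.range n, a * τ * Real.log (n + 1) * (1 + b * τ) ^ k
                = a * τ * Real.log (n + 1) * (((1 + b * τ) ^ n - 1) / (b * τ)) := by
              rw [← Finset.mul_sum, hgeom]
            rw [← h2]
            exact add_le_add_right (mul_le_mul_of_nonneg_left hsum hbτ.le) _
        _ = a * τ * Real.log (n + 1) * (1 + b * τ) ^ n := by
            field_simp
            ring
  intro n hn
  have hLn : 0 ≤ Real.log ((n : ℝ) + 1) :=
    Real.log_nonneg (by have := (n.cast_nonneg : (0:ℝ) ≤ n); linarith)
  have hpow : (1 + b * τ) ^ n ≤ Real.exp (b * tmax) := by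
    calc (1 + b * τ) ^ n ≤ Real.exp (b * τ) ^ n := by
          apply pow_le_pow_left₀ (by positivity)
          linarith [Real.add_one_le_exp (b * τ)]
      _ = Real.exp ((n : ℝ) * (b * τ)) := (Real.exp_nat_mul _ n).symm
      _ ≤ Real.exp (b * tmax) := by
          apply Real.exp_le_exp.mpr
          nlinarith
  calc e n ≤ a * τ * Real.log (n + 1) * (1 + b * τ) ^ n := key n hn
    _ ≤ a * τ * Real.log (n + 1) * Real.exp (b * tmax) := by
        apply mul_le_mul_of_nonneg_left hpow (by positivity)
    _ = a * Real.exp (b * tmax) * Real.log (n + 1) * τ := by ring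
end

section
/- Let $T_0$ and $S$ be $C_0$-semigroups on Banach spaces $E$ and $F$ respectively, both bounded by $M_0$ on $[0,t_{\max}]$, let $D_0 : F \to E$ be a bounded linear operator, and let $B$ be the generator of $S$. Define on $E \times \mathrm{dom}(B)$ the operator matrix $\mathbf{T}(\tau)(x,y) = (T_0(\tau)x + V(\tau)y + D_0 S(\tau)y - T_0(\tau)D_0 y,\ S(\tau)y)$ with $V(\tau) = -\tau T_0(\tau) D_0 B S(\tau)$. Then for all $k \geq 1$, the $k$-th power satisfies $\mathbf{T}(\tau)^k(x,y) = (T_0(k\tau)x - T_0(k\tau)D_0 y + D_0 S(k\tau) y + V_k(\tau)y,\ S(k\tau)y)$, where $V_k(\tau)y = \sum_{j=0}^{k-1} T_0((k-1-j)\tau) V(\tau) S(j\tau) y$. -/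
open Set

/-- The Lie splitting propagator `𝐓(τ)(x,y) = (T₀(τ)x + V(τ)y + D₀S(τ)y - T₀(τ)D₀y, S(τ)y)`
with `V(τ) = -τ T₀(τ) D₀ B S(τ)`. -/
noncomputable def splitOp {E F : Type*} [NormedAddCommGroup E] [NormedSpace ℝ E]
    [NormedAddCommGroup F] [NormedSpace ℝ F]
    (T0 : ℝ → E →L[ℝ] E) (S : ℝ → F →L[ℝ] F) (D0 : F →L[ℝ] E) (B : F →ₗ[ℝ] F)
    (τ : ℝ) : E × F → E × F :=
  fun p => (T0 τ p.1 + (-(τ • T0 τ (D0 (B (S τ p.2))))) + D0 (S τ p.2) - T0 τ (D0 p.2),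
    S τ p.2)

/-- Power formula for the Lie splitting operator:
`𝐓(τ)^k (x,y) = (T₀(kτ)x - T₀(kτ)D₀y + D₀S(kτ)y + V_k(τ)y, S(kτ)y)` with
`V_k(τ)y = ∑_{j=0}^{k-1} T₀((k-1-j)τ) V(τ) S(jτ) y`. -/
theorem stmt3 {E F : Type*} [NormedAddCommGroup E] [NormedSpace ℝ E]
    [NormedAddCommGroup F] [NormedSpace ℝ F]
    (T0 : ℝ → E →L[ℝ] E) (S : ℝ → F →L[ℝ] F) (D0 : F →L[ℝ] E) (B : F →ₗ[ℝ] F)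
    (domB : Submodule ℝ F) (tmax M0 τ : ℝ) (htmax : 0 < tmax) (hτ : 0 < τ)
    (hT00 : T0 0 = 1)
    (hT0sg : ∀ s t : ℝ, 0 ≤ s → 0 ≤ t → T0 (s + t) = (T0 s).comp (T0 t))
    (hS0 : S 0 = 1)
    (hSsg : ∀ s t : ℝ, 0 ≤ s → 0 ≤ t → S (s + t) = (S s).comp (S t))
    (hT0bdd : ∀ t ∈ Icc (0:ℝ) tmax, ‖T0 t‖ ≤ M0)
    (hSbdd : ∀ t ∈ Icc (0:ℝ) tmax, ‖S t‖ ≤ M0)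
    (hSinv : ∀ t : ℝ, 0 ≤ t → ∀ y ∈ domB, S t y ∈ domB)
    (hcomm : ∀ t : ℝ, 0 ≤ t → ∀ y ∈ domB, B (S t y) = S t (B y)) :
    ∀ k : ℕ, 1 ≤ k → ∀ x : E, ∀ y ∈ domB,
      (splitOp T0 S D0 B τ)^[k] (x, y)
        = (T0 ((k : ℝ) * τ) x - T0 ((k : ℝ) * τ) (D0 y) + D0 (S ((k : ℝ) * τ) y)
            + ∑ j ∈ Finset.range k,
                T0 (((k : ℝ) - 1 - (j : ℝ)) * τ)
                  (-(τ • T0 τ (D0 (B (S τ (S ((j : ℝ) * τ) y)))))),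
          S ((k : ℝ) * τ) y) := by

  intro k hk x y hy
  induction k, hk using Nat.le_induction with
  | base =>
    simp only [Function.iterate_one, splitOp, Finset.sum_range_one, Nat.cast_one,
      Nat.cast_zero, one_mul, zero_mul, hS0, ContinuousLinearMap.one_apply]
    norm_num [hT00, ContinuousLinearMap.one_apply]
    abel
  | succ k hk ih =>
    have hkτ : (0:ℝ) ≤ (k:ℝ) * τ := by positivity
    rw [Function.iterate_succ_apply', ih]
    have hA : ∀ z : E, T0 ((((k:ℕ)+1 : ℕ):ℝ) * τ) z = T0 τ (T0 ((k:ℝ) * τ) z) := by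
      intro z
      have : (((k:ℕ)+1 : ℕ):ℝ) * τ = τ + (k:ℝ) * τ := by push_cast; ring
      rw [this, hT0sg τ ((k:ℝ)*τ) hτ.le hkτ]; rfl
    have hB : S ((((k:ℕ)+1 : ℕ):ℝ) * τ) y = S τ (S ((k:ℝ) * τ) y) := by
      have : (((k:ℕ)+1 : ℕ):ℝ) * τ = τ + (k:ℝ) * τ := by push_cast; ring
      rw [this, hSsg τ ((k:ℝ)*τ) hτ.le hkτ]; rfl
    have hSum : ∑ j ∈ Finset.range (k+1),
        T0 (((((k:ℕ)+1:ℕ):ℝ) - 1 - (j:ℝ)) * τ)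
          (-(τ • T0 τ (D0 (B (S τ (S ((j:ℝ) * τ) y))))))
        = T0 τ (∑ j ∈ Finset.range k,
            T0 (((k:ℝ) - 1 - (j:ℝ)) * τ)
              (-(τ • T0 τ (D0 (B (S τ (S ((j:ℝ) * τ) y)))))))
          + (-(τ • T0 τ (D0 (B (S τ (S ((k:ℝ) * τ) y)))))) := by
      rw [Finset.sum_range_succ, map_sum]
      congr 1
      · refine Finset.sum_congr rfl ?_
        intro j hj
        have hj' : (j:ℝ) ≤ (k:ℝ) - 1 := by
          have := Finset.mem_range.mp hj
          have : (j:ℝ) + 1 ≤ (k:ℝ) := by exact_mod_cast this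
          linarith
        have hnn : (0:ℝ) ≤ ((k:ℝ) - 1 - (j:ℝ)) * τ := by
          apply mul_nonneg _ hτ.le; linarith
        have heq : ((((k:ℕ)+1:ℕ):ℝ) - 1 - (j:ℝ)) * τ = τ + ((k:ℝ) - 1 - (j:ℝ)) * τ := by
          push_cast; ring
        rw [heq, hT0sg τ _ hτ.le hnn]; rfl
      · have heq : ((((k:ℕ)+1:ℕ):ℝ) - 1 - (k:ℝ)) * τ = 0 := by push_cast; ring
        rw [heq, hT00, ContinuousLinearMap.one_apply]
    refine Prod.ext ?_ ?_
    · simp only [splitOp]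
      rw [hSum, hA, hA (D0 y), hB, map_add, map_add, map_sub]
      abel
    · simp only [splitOp]; exact hB.symm
end

section
/- In the setting of the splitting operator $\mathbf{T}(\tau)$ (with $V(\tau) = -\tau T_0(\tau)D_0 B S(\tau)$), there exists $M > 0$ such that for all $\tau > 0$, all $(x,y) \in E \times \mathrm{dom}(B)$, and all $k \in \mathbb{N}$ with $k\tau \in [0,t_{\max}]$: $\|\mathbf{T}(\tau)^k(x,y)\| \leq M\|(x,y)\| + M\|By\|$, where $\|(x,y)\| = \|x\|_E + \|y\|_F$. -/
open Set

open Set Finset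

lemma splitOp_pow {E F : Type*} [NormedAddCommGroup E] [NormedSpace ℝ E]
    [NormedAddCommGroup F] [NormedSpace ℝ F]
    (T0 : ℝ → E →L[ℝ] E) (S : ℝ → F →L[ℝ] F) (D0 : F →L[ℝ] E) (B : F →ₗ[ℝ] F)
    (hT00 : T0 0 = 1)
    (hT0sg : ∀ s t : ℝ, 0 ≤ s → 0 ≤ t → T0 (s + t) = (T0 s).comp (T0 t))
    (hS0 : S 0 = 1)
    (hSsg : ∀ s t : ℝ, 0 ≤ s → 0 ≤ t → S (s + t) = (S s).comp (S t))
    (τ : ℝ) (hτ : 0 ≤ τ) (x : E) (y : F) (k : ℕ) :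
    (splitOp T0 S D0 B τ)^[k] (x, y) =
      (T0 ((k:ℝ)*τ) x - T0 ((k:ℝ)*τ) (D0 y) + D0 (S ((k:ℝ)*τ) y)
        + ∑ j ∈ Finset.range k,
            T0 (((k-1-j : ℕ) : ℝ)*τ) (-(τ • T0 τ (D0 (B (S τ (S ((j:ℝ)*τ) y)))))),
       S ((k:ℝ)*τ) y) := by
  induction k with
  | zero => simp [hT00, hS0]
  | succ k ih =>
    have hk : (0:ℝ) ≤ (k:ℝ)*τ := by positivity
    have hsucc : ((k+1:ℕ):ℝ)*τ = τ + (k:ℝ)*τ := by push_cast; ring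
    have hS1 : S (((k+1:ℕ):ℝ)*τ) y = S τ (S ((k:ℝ)*τ) y) := by
      rw [hsucc, hSsg τ _ hτ hk]; rfl
    rw [Function.iterate_succ_apply', ih]
    unfold splitOp
    dsimp only
    refine Prod.ext ?_ hS1.symm
    dsimp only
    rw [map_add, map_add, map_sub, map_sum]
    have hx : T0 τ (T0 ((k:ℝ)*τ) x) = T0 (((k+1:ℕ):ℝ)*τ) x := by
      rw [hsucc, hT0sg τ _ hτ hk]; rfl
    have hd : T0 τ (T0 ((k:ℝ)*τ) (D0 y)) = T0 (((k+1:ℕ):ℝ)*τ) (D0 y) := by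
      rw [hsucc, hT0sg τ _ hτ hk]; rfl
    have hsum : ∑ j ∈ Finset.range k,
        T0 τ (T0 (((k-1-j : ℕ) : ℝ)*τ) (-(τ • T0 τ (D0 (B (S τ (S ((j:ℝ)*τ) y)))))))
        = ∑ j ∈ Finset.range k,
        T0 (((k-j : ℕ) : ℝ)*τ) (-(τ • T0 τ (D0 (B (S τ (S ((j:ℝ)*τ) y)))))) := by
      refine Finset.sum_congr rfl fun j hj => ?_
      have hjk : j < k := Finset.mem_range.mp hj
      have h1 : ((k-j:ℕ):ℝ)*τ = τ + ((k-1-j:ℕ):ℝ)*τ := by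
        have : k - j = (k - 1 - j) + 1 := by omega
        rw [this]; push_cast; ring
      rw [h1, hT0sg τ _ hτ (by positivity)]; rfl
    rw [hsum, hx, hd, hS1]
    have hlast : ∑ j ∈ Finset.range (k+1),
        T0 (((k+1-1-j : ℕ) : ℝ)*τ) (-(τ • T0 τ (D0 (B (S τ (S ((j:ℝ)*τ) y))))))
        = (∑ j ∈ Finset.range k,
            T0 (((k-j : ℕ) : ℝ)*τ) (-(τ • T0 τ (D0 (B (S τ (S ((j:ℝ)*τ) y)))))))
          + (-(τ • T0 τ (D0 (B (S τ (S ((k:ℝ)*τ) y)))))) := by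
      have h0 : ∀ j : ℕ, ((k+1-1-j : ℕ):ℝ) = ((k-j:ℕ):ℝ) := fun j => by
        norm_cast
      simp only [h0]
      rw [Finset.sum_range_succ]
      congr 1
      rw [Nat.sub_self]
      simp [hT00]
    rw [hlast]
    abel
/-- Stability of the powers of the splitting operator: there exists `M > 0`
such that `‖𝐓(τ)^k (x,y)‖ ≤ M ‖(x,y)‖ + M ‖By‖` (with the sum norm on `E × F`)
for all `τ > 0`, `(x,y) ∈ E × dom(B)`, and `k` with `kτ ∈ [0, t_max]`. -/
theorem stmt4 {E F : Type*} [NormedAddCommGroup E] [NormedSpace ℝ E]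
    [NormedAddCommGroup F] [NormedSpace ℝ F]
    (T0 : ℝ → E →L[ℝ] E) (S : ℝ → F →L[ℝ] F) (D0 : F →L[ℝ] E) (B : F →ₗ[ℝ] F)
    (domB : Submodule ℝ F) (tmax M0 : ℝ) (htmax : 0 < tmax)
    (hT00 : T0 0 = 1)
    (hT0sg : ∀ s t : ℝ, 0 ≤ s → 0 ≤ t → T0 (s + t) = (T0 s).comp (T0 t))
    (hS0 : S 0 = 1)
    (hSsg : ∀ s t : ℝ, 0 ≤ s → 0 ≤ t → S (s + t) = (S s).comp (S t))
    (hT0bdd : ∀ t ∈ Icc (0:ℝ) tmax, ‖T0 t‖ ≤ M0)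
    (hSbdd : ∀ t ∈ Icc (0:ℝ) tmax, ‖S t‖ ≤ M0)
    (hSinv : ∀ t : ℝ, 0 ≤ t → ∀ y ∈ domB, S t y ∈ domB)
    (hcomm : ∀ t : ℝ, 0 ≤ t → ∀ y ∈ domB, B (S t y) = S t (B y)) :
    ∃ M > 0, ∀ τ : ℝ, 0 < τ → ∀ x : E, ∀ y ∈ domB, ∀ k : ℕ,
      (k : ℝ) * τ ∈ Icc (0:ℝ) tmax →
      ‖((splitOp T0 S D0 B τ)^[k] (x, y)).1‖ + ‖((splitOp T0 S D0 B τ)^[k] (x, y)).2‖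
        ≤ M * (‖x‖ + ‖y‖) + M * ‖B y‖ := by
  have hM0 : 0 ≤ M0 := le_trans (norm_nonneg _) (hT0bdd 0 ⟨le_refl _, le_of_lt htmax⟩)
  refine ⟨M0 + 2*M0*‖D0‖ + tmax*(M0*(M0*M0))*‖D0‖ + 1, by positivity, ?_⟩
  intro τ hτ x y hy k hk
  rw [splitOp_pow T0 S D0 B hT00 hT0sg hS0 hSsg τ hτ.le x y k]
  obtain ⟨hk0, hk1⟩ := hk
  dsimp only
  have hDnn : (0:ℝ) ≤ ‖D0‖ := norm_nonneg _
  have hmem : ∀ m : ℕ, m ≤ k → ((m:ℝ)*τ) ∈ Icc (0:ℝ) tmax := by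
    intro m hm
    constructor
    · positivity
    · refine le_trans ?_ hk1
      exact mul_le_mul_of_nonneg_right (by exact_mod_cast hm) hτ.le
  have hT0k : ∀ (z : E), ‖T0 ((k:ℝ)*τ) z‖ ≤ M0 * ‖z‖ := fun z =>
    (T0 _).le_of_opNorm_le (hT0bdd _ (hmem k le_rfl)) z
  have hSk : ∀ (z : F), ‖S ((k:ℝ)*τ) z‖ ≤ M0 * ‖z‖ := fun z =>
    (S _).le_of_opNorm_le (hSbdd _ (hmem k le_rfl)) z
  -- bound each summand
  have hsummand : ∀ j ∈ Finset.range k,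
      ‖T0 (((k-1-j : ℕ) : ℝ)*τ) (-(τ • T0 τ (D0 (B (S τ (S ((j:ℝ)*τ) y))))))‖
        ≤ τ * (M0*(M0*M0)) * ‖D0‖ * ‖B y‖ := by
    intro j hj
    have hjk : j < k := Finset.mem_range.mp hj
    have hjτ : (0:ℝ) ≤ (j:ℝ)*τ := by positivity
    have hy1 : S ((j:ℝ)*τ) y ∈ domB := hSinv _ hjτ y hy
    have hB1 : B (S τ (S ((j:ℝ)*τ) y)) = S τ (S ((j:ℝ)*τ) (B y)) := by
      rw [hcomm τ hτ.le _ hy1, hcomm _ hjτ y hy]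
    have hS2 : S τ (S ((j:ℝ)*τ) (B y)) = S (((j+1:ℕ):ℝ)*τ) (B y) := by
      rw [show ((j+1:ℕ):ℝ)*τ = τ + (j:ℝ)*τ by push_cast; ring, hSsg τ _ hτ.le hjτ]; rfl
    have hτmem : τ ∈ Icc (0:ℝ) tmax := by
      constructor
      · exact hτ.le
      · refine le_trans ?_ hk1
        have : (1:ℝ) ≤ (k:ℝ) := by exact_mod_cast Nat.one_le_iff_ne_zero.mpr (by omega)
        nlinarith
    have h1 : ‖S (((j+1:ℕ):ℝ)*τ) (B y)‖ ≤ M0 * ‖B y‖ :=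
      (S _).le_of_opNorm_le (hSbdd _ (hmem (j+1) hjk)) _
    have h2 : ‖D0 (S (((j+1:ℕ):ℝ)*τ) (B y))‖ ≤ ‖D0‖ * (M0 * ‖B y‖) :=
      le_trans ((D0).le_opNorm _) (by nlinarith [norm_nonneg (S (((j+1:ℕ):ℝ)*τ) (B y))])
    have h3 : ‖T0 τ (D0 (S (((j+1:ℕ):ℝ)*τ) (B y)))‖ ≤ M0 * (‖D0‖ * (M0 * ‖B y‖)) := by
      refine le_trans ((T0 τ).le_opNorm _) ?_
      have := hT0bdd τ hτmem
      nlinarith [norm_nonneg (D0 (S (((j+1:ℕ):ℝ)*τ) (B y))), norm_nonneg (T0 τ)]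
    rw [hB1, hS2]
    have hkjmem : (((k-1-j:ℕ):ℝ)*τ) ∈ Icc (0:ℝ) tmax := hmem _ (by omega)
    calc ‖T0 (((k-1-j : ℕ) : ℝ)*τ) (-(τ • T0 τ (D0 (S (((j+1:ℕ):ℝ)*τ) (B y)))))‖
        ≤ M0 * ‖-(τ • T0 τ (D0 (S (((j+1:ℕ):ℝ)*τ) (B y))))‖ :=
          (T0 _).le_of_opNorm_le (hT0bdd _ hkjmem) _
      _ = M0 * (τ * ‖T0 τ (D0 (S (((j+1:ℕ):ℝ)*τ) (B y)))‖) := by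
          rw [norm_neg, norm_smul, Real.norm_eq_abs, abs_of_pos hτ]
      _ ≤ τ * (M0*(M0*M0)) * ‖D0‖ * ‖B y‖ := by
          nlinarith [mul_le_mul_of_nonneg_left h3 (mul_nonneg hM0 hτ.le)]
  have hsum : ‖∑ j ∈ Finset.range k,
      T0 (((k-1-j : ℕ) : ℝ)*τ) (-(τ • T0 τ (D0 (B (S τ (S ((j:ℝ)*τ) y))))))‖
      ≤ tmax * (M0*(M0*M0)) * ‖D0‖ * ‖B y‖ := by
    refine le_trans (norm_sum_le _ _) ?_
    refine le_trans (Finset.sum_le_sum hsummand) ?_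
    rw [Finset.sum_const, Finset.card_range, nsmul_eq_mul]
    have : (k:ℝ) * (τ * (M0*(M0*M0)) * ‖D0‖ * ‖B y‖) =
        ((k:ℝ)*τ) * ((M0*(M0*M0)) * ‖D0‖ * ‖B y‖) := by ring
    rw [this]
    have h2 : tmax * (M0*(M0*M0)) * ‖D0‖ * ‖B y‖ =
        tmax * ((M0*(M0*M0)) * ‖D0‖ * ‖B y‖) := by ring
    rw [h2]
    exact mul_le_mul_of_nonneg_right hk1 (by positivity)
  have hbnd1 : ‖T0 ((k:ℝ)*τ) x - T0 ((k:ℝ)*τ) (D0 y) + D0 (S ((k:ℝ)*τ) y)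
        + ∑ j ∈ Finset.range k,
            T0 (((k-1-j : ℕ) : ℝ)*τ) (-(τ • T0 τ (D0 (B (S τ (S ((j:ℝ)*τ) y))))))‖
      ≤ M0*‖x‖ + M0*(‖D0‖*‖y‖) + ‖D0‖*(M0*‖y‖) + tmax * (M0*(M0*M0)) * ‖D0‖ * ‖B y‖ := by
    have b1 : ‖T0 ((k:ℝ)*τ) x‖ ≤ M0 * ‖x‖ := hT0k x
    have b2 : ‖T0 ((k:ℝ)*τ) (D0 y)‖ ≤ M0 * (‖D0‖ * ‖y‖) :=
      le_trans (hT0k _) (mul_le_mul_of_nonneg_left (D0.le_opNorm y) hM0)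
    have b3 : ‖D0 (S ((k:ℝ)*τ) y)‖ ≤ ‖D0‖ * (M0 * ‖y‖) :=
      le_trans (D0.le_opNorm _) (mul_le_mul_of_nonneg_left (hSk y) hDnn)
    refine le_trans (norm_add_le _ _) (add_le_add (le_trans (norm_add_le _ _)
      (add_le_add (le_trans (norm_sub_le _ _) (add_le_add b1 b2)) b3)) hsum)
  have hbnd2 := hSk y
  nlinarith [norm_nonneg x, norm_nonneg y, norm_nonneg (B y), hbnd1, hbnd2,
    mul_nonneg hM0 hDnn, mul_nonneg (mul_nonneg htmax.le (by positivity : (0:ℝ) ≤ M0*(M0*M0))) hDnn]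
end

section
/- In the setting of the splitting operator $\mathbf{T}(\tau)$, assume additionally that $S$ is a bounded analytic semigroup, so that $\|B S(t)\| \leq M_2/t$ for $t \in (0,t_{\max}]$. Then there exists $M > 0$ such that for all $\tau > 0$, all $(x,y) \in E \times F$, and all $k \geq 1$ with $k\tau \in [0,t_{\max}]$: $\|\mathbf{T}(\tau)^k(x,y)\| \leq M(1 + \log k)\|(x,y)\|$. -/
open Set

set_option maxHeartbeats 2000000 in
/-- If additionally `S` is a bounded analytic semigroup, so that
`‖B S(t)‖ ≤ M₂/t` for `t ∈ (0, t_max]`, then there exists `M > 0` such that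
`‖𝐓(τ)^k (x,y)‖ ≤ M (1 + log k) ‖(x,y)‖` (sum norm on `E × F`) for all `τ > 0`,
`(x,y) ∈ E × F`, and `k ≥ 1` with `kτ ∈ [0, t_max]`. -/
theorem stmt5 {E F : Type*} [NormedAddCommGroup E] [NormedSpace ℝ E]
    [NormedAddCommGroup F] [NormedSpace ℝ F]
    (T0 : ℝ → E →L[ℝ] E) (S : ℝ → F →L[ℝ] F) (D0 : F →L[ℝ] E) (B : F →ₗ[ℝ] F)
    (tmax M1 M2 : ℝ) (htmax : 0 < tmax) (hM1 : 0 < M1) (hM2 : 0 < M2)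
    (hT00 : T0 0 = 1)
    (hT0sg : ∀ s t : ℝ, 0 ≤ s → 0 ≤ t → T0 (s + t) = (T0 s).comp (T0 t))
    (hS0 : S 0 = 1)
    (hSsg : ∀ s t : ℝ, 0 ≤ s → 0 ≤ t → S (s + t) = (S s).comp (S t))
    (hT0bdd : ∀ t ∈ Icc (0:ℝ) tmax, ‖T0 t‖ ≤ M1)
    (hSbdd : ∀ t ∈ Icc (0:ℝ) tmax, ‖S t‖ ≤ M1)
    (hSanal : ∀ t : ℝ, 0 < t → t ≤ tmax → ∀ y : F, ‖B (S t y)‖ ≤ (M2 / t) * ‖y‖) :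
    ∃ M > 0, ∀ τ : ℝ, 0 < τ → ∀ x : E, ∀ y : F, ∀ k : ℕ, 1 ≤ k →
      (k : ℝ) * τ ∈ Icc (0:ℝ) tmax →
      ‖((splitOp T0 S D0 B τ)^[k] (x, y)).1‖ + ‖((splitOp T0 S D0 B τ)^[k] (x, y)).2‖
        ≤ M * (1 + Real.log k) * (‖x‖ + ‖y‖) := by
  classical
  refine ⟨M1 * (1 + ‖D0‖) * (2 + M1 * M2), by positivity, ?_⟩
  intro τ hτ x y k hk hkτ
  obtain ⟨-, hkt⟩ := hkτ
  have hk1 : (1:ℝ) ≤ (k:ℝ) := by exact_mod_cast hk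
  have hτmax : τ ≤ tmax := le_trans (by nlinarith) hkt
  -- bounds for T0 and S at times m*τ with m ≤ k
  have hmem : ∀ m : ℕ, m ≤ k → ((m:ℝ)*τ) ∈ Icc (0:ℝ) tmax := by
    intro m hm
    constructor
    · positivity
    · calc (m:ℝ)*τ ≤ (k:ℝ)*τ := by
            apply mul_le_mul_of_nonneg_right _ hτ.le; exact_mod_cast hm
        _ ≤ tmax := hkt
  -- semigroup step lemmas
  have hT0add : ∀ (m : ℕ) (v : E), T0 τ (T0 ((m:ℝ)*τ) v) = T0 (((m+1:ℕ):ℝ)*τ) v := by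
    intro m v
    have := hT0sg τ ((m:ℝ)*τ) hτ.le (by positivity)
    have harg : (((m+1:ℕ)):ℝ)*τ = τ + (m:ℝ)*τ := by push_cast; ring
    rw [harg, this]; rfl
  have hSadd : ∀ (m : ℕ) (z : F), S τ (S ((m:ℝ)*τ) z) = S (((m+1:ℕ):ℝ)*τ) z := by
    intro m z
    have := hSsg τ ((m:ℝ)*τ) hτ.le (by positivity)
    have harg : (((m+1:ℕ)):ℝ)*τ = τ + (m:ℝ)*τ := by push_cast; ring
    rw [harg, this]; rfl
  -- closed formula for the iterates
  have key : ∀ n : ℕ, (splitOp T0 S D0 B τ)^[n] (x, y) =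
      (T0 ((n:ℝ)*τ) (x - D0 y)
        + ∑ j ∈ Finset.range n, T0 ((j:ℝ)*τ)
            (-(τ • T0 τ (D0 (B (S τ (S (((n-1-j : ℕ):ℝ)*τ) y))))))
        + D0 (S ((n:ℝ)*τ) y),
       S ((n:ℝ)*τ) y) := by
    intro n
    induction n with
    | zero => simp [hT00, hS0]
    | succ n ih =>
      rw [Function.iterate_succ_apply', ih]
      have hsum : ∑ j ∈ Finset.range (n+1), T0 ((j:ℝ)*τ)
            (-(τ • T0 τ (D0 (B (S τ (S (((n+1-1-j : ℕ):ℝ)*τ) y))))))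
          = (∑ j ∈ Finset.range n, T0 (((j+1:ℕ):ℝ)*τ)
              (-(τ • T0 τ (D0 (B (S τ (S (((n-1-j : ℕ):ℝ)*τ) y)))))))
            + (-(τ • T0 τ (D0 (B (S τ (S ((n:ℝ)*τ) y)))))) := by
        rw [Finset.sum_range_succ']
        congr 1
        · refine Finset.sum_congr rfl fun j hj => ?_
          have e : n + 1 - 1 - (j + 1) = n - 1 - j := by omega
          rw [e]
        · have h0 : ((0:ℕ):ℝ)*τ = 0 := by norm_num
          have h1 : (n+1-1-0 : ℕ) = n := by omega
          rw [h1, h0, hT00]; rfl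
      simp only [splitOp]
      refine Prod.ext ?_ ?_
      · dsimp only
        rw [map_add, map_add, hT0add n (x - D0 y), map_sum, hsum]
        have hmap : ∀ j ∈ Finset.range n,
            T0 τ (T0 ((j:ℝ)*τ) (-(τ • T0 τ (D0 (B (S τ (S (((n-1-j : ℕ):ℝ)*τ) y)))))))
            = T0 (((j+1:ℕ):ℝ)*τ) (-(τ • T0 τ (D0 (B (S τ (S (((n-1-j : ℕ):ℝ)*τ) y)))))) :=
          fun j _ => hT0add j _
        rw [Finset.sum_congr rfl hmap, hSadd n y]
        abel
      · exact hSadd n y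
  rw [key k]
  dsimp only
  -- norm estimates
  have hD0 : (0:ℝ) ≤ ‖D0‖ := norm_nonneg _
  have hy : (0:ℝ) ≤ ‖y‖ := norm_nonneg _
  have hx : (0:ℝ) ≤ ‖x‖ := norm_nonneg _
  have hL : (0:ℝ) ≤ Real.log k := Real.log_nonneg hk1
  have hSk : ‖S ((k:ℝ)*τ) y‖ ≤ M1 * ‖y‖ := by
    calc ‖S ((k:ℝ)*τ) y‖ ≤ ‖S ((k:ℝ)*τ)‖ * ‖y‖ := (S _).le_opNorm y
      _ ≤ M1 * ‖y‖ := by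
          apply mul_le_mul_of_nonneg_right (hSbdd _ (hmem k le_rfl)) hy
  have hA : ‖T0 ((k:ℝ)*τ) (x - D0 y)‖ ≤ M1 * (‖x‖ + ‖D0‖ * ‖y‖) := by
    calc ‖T0 ((k:ℝ)*τ) (x - D0 y)‖ ≤ ‖T0 ((k:ℝ)*τ)‖ * ‖x - D0 y‖ := (T0 _).le_opNorm _
      _ ≤ M1 * (‖x‖ + ‖D0‖ * ‖y‖) := by
          apply mul_le_mul (hT0bdd _ (hmem k le_rfl)) _ (norm_nonneg _) hM1.le
          calc ‖x - D0 y‖ ≤ ‖x‖ + ‖D0 y‖ := norm_sub_le _ _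
            _ ≤ ‖x‖ + ‖D0‖ * ‖y‖ := by
                exact add_le_add le_rfl (D0.le_opNorm y)
  -- bound each summand
  have hterm : ∀ j ∈ Finset.range k,
      ‖T0 ((j:ℝ)*τ) (-(τ • T0 τ (D0 (B (S τ (S (((k-1-j : ℕ):ℝ)*τ) y))))))‖
      ≤ M1 * M1 * ‖D0‖ * M2 * ‖y‖ * (((k-1-j : ℕ):ℝ)+1)⁻¹ := by
    intro j hj
    rw [Finset.mem_range] at hj
    set m : ℕ := k - 1 - j with hm
    have hm1 : m + 1 ≤ k := by omega
    have hSS : S τ (S ((m:ℝ)*τ) y) = S (((m+1:ℕ):ℝ)*τ) y := hSadd m y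
    have hmpos : (0:ℝ) < ((m:ℝ)+1)*τ := by positivity
    have hBle : ‖B (S (((m+1:ℕ):ℝ)*τ) y)‖ ≤ (M2 / (((m:ℝ)+1)*τ)) * ‖y‖ := by
      have := hSanal (((m+1:ℕ):ℝ)*τ) (by push_cast; positivity)
        (hmem (m+1) hm1).2 y
      convert this using 3 <;> push_cast <;> ring
    have hT0τ : ‖T0 τ‖ ≤ M1 := hT0bdd τ ⟨hτ.le, hτmax⟩
    have hT0j : ‖T0 ((j:ℝ)*τ)‖ ≤ M1 := hT0bdd _ (hmem j (by omega))
    calc ‖T0 ((j:ℝ)*τ) (-(τ • T0 τ (D0 (B (S τ (S ((m:ℝ)*τ) y))))))‖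
        ≤ ‖T0 ((j:ℝ)*τ)‖ * ‖-(τ • T0 τ (D0 (B (S τ (S ((m:ℝ)*τ) y)))))‖ := (T0 _).le_opNorm _
      _ = ‖T0 ((j:ℝ)*τ)‖ * (τ * ‖T0 τ (D0 (B (S (((m+1:ℕ):ℝ)*τ) y)))‖) := by
          rw [hSS, norm_neg, norm_smul, Real.norm_eq_abs, abs_of_pos hτ]
      _ ≤ M1 * (τ * (M1 * (‖D0‖ * ((M2 / (((m:ℝ)+1)*τ)) * ‖y‖)))) := by
          apply mul_le_mul hT0j _ (by positivity) hM1.le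
          apply mul_le_mul_of_nonneg_left _ hτ.le
          calc ‖T0 τ (D0 (B (S (((m+1:ℕ):ℝ)*τ) y)))‖
              ≤ ‖T0 τ‖ * ‖D0 (B (S (((m+1:ℕ):ℝ)*τ) y))‖ := (T0 _).le_opNorm _
            _ ≤ M1 * (‖D0‖ * ((M2 / (((m:ℝ)+1)*τ)) * ‖y‖)) := by
                apply mul_le_mul hT0τ _ (norm_nonneg _) hM1.le
                calc ‖D0 (B (S (((m+1:ℕ):ℝ)*τ) y))‖
                    ≤ ‖D0‖ * ‖B (S (((m+1:ℕ):ℝ)*τ) y)‖ := D0.le_opNorm _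
                  _ ≤ ‖D0‖ * ((M2 / (((m:ℝ)+1)*τ)) * ‖y‖) :=
                      mul_le_mul_of_nonneg_left hBle hD0
      _ = M1 * M1 * ‖D0‖ * M2 * ‖y‖ * (((m:ℕ):ℝ)+1)⁻¹ := by
          field_simp
  have hSum : ‖∑ j ∈ Finset.range k, T0 ((j:ℝ)*τ)
        (-(τ • T0 τ (D0 (B (S τ (S (((k-1-j : ℕ):ℝ)*τ) y))))))‖
      ≤ M1 * M1 * ‖D0‖ * M2 * ‖y‖ * (1 + Real.log k) := by
    refine le_trans (norm_sum_le _ _) (le_trans (Finset.sum_le_sum hterm) ?_)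
    rw [← Finset.mul_sum]
    apply mul_le_mul_of_nonneg_left _ (by positivity)
    have hrefl : ∑ j ∈ Finset.range k, (((k-1-j : ℕ):ℝ)+1)⁻¹
        = ∑ j ∈ Finset.range k, (((j:ℕ):ℝ)+1)⁻¹ :=
      Finset.sum_range_reflect (fun j => (((j:ℕ):ℝ)+1)⁻¹) k
    rw [hrefl]
    have : ∑ j ∈ Finset.range k, (((j:ℕ):ℝ)+1)⁻¹ = (harmonic k : ℝ) := by
      rw [harmonic]; push_cast; rfl
    rw [this]
    exact harmonic_le_one_add_log k
  have hD0Sk : ‖D0 (S ((k:ℝ)*τ) y)‖ ≤ ‖D0‖ * (M1 * ‖y‖) :=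
    le_trans (D0.le_opNorm _) (mul_le_mul_of_nonneg_left hSk hD0)
  have htot : ‖T0 ((k:ℝ)*τ) (x - D0 y)
        + ∑ j ∈ Finset.range k, T0 ((j:ℝ)*τ)
            (-(τ • T0 τ (D0 (B (S τ (S (((k-1-j : ℕ):ℝ)*τ) y))))))
        + D0 (S ((k:ℝ)*τ) y)‖ + ‖S ((k:ℝ)*τ) y‖
      ≤ M1 * (‖x‖ + ‖D0‖ * ‖y‖) + M1 * M1 * ‖D0‖ * M2 * ‖y‖ * (1 + Real.log k)
        + ‖D0‖ * (M1 * ‖y‖) + M1 * ‖y‖ := by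
    have := norm_add₃_le (a := T0 ((k:ℝ)*τ) (x - D0 y))
      (b := ∑ j ∈ Finset.range k, T0 ((j:ℝ)*τ)
            (-(τ • T0 τ (D0 (B (S τ (S (((k-1-j : ℕ):ℝ)*τ) y)))))))
      (c := D0 (S ((k:ℝ)*τ) y))
    have h2 := add_le_add (add_le_add (add_le_add hA hSum) hD0Sk) hSk
    linarith
  refine le_trans htot ?_
  have e : M1 * (1 + ‖D0‖) * (2 + M1 * M2) * (1 + Real.log ↑k) * (‖x‖ + ‖y‖)
      - (M1 * (‖x‖ + ‖D0‖ * ‖y‖) + M1 * M1 * ‖D0‖ * M2 * ‖y‖ * (1 + Real.log ↑k)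
        + ‖D0‖ * (M1 * ‖y‖) + M1 * ‖y‖)
    = M1 * ‖x‖ + M1 * ‖y‖
      + (2*M1 + 2*M1*‖D0‖ + M1*M1*M2 + M1*M1*M2*‖D0‖) * (Real.log ↑k * ‖x‖)
      + (2*M1 + 2*M1*‖D0‖ + M1*M1*M2) * (Real.log ↑k * ‖y‖)
      + 2*M1*‖D0‖*‖x‖ + M1*M1*M2*‖y‖ + M1*M1*M2*‖x‖ + M1*M1*M2*‖D0‖*‖x‖ := by ring
  have h3 : 0 ≤ (2*M1 + 2*M1*‖D0‖ + M1*M1*M2 + M1*M1*M2*‖D0‖) * (Real.log ↑k * ‖x‖) :=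
    mul_nonneg (by positivity) (mul_nonneg hL hx)
  have h4 : 0 ≤ (2*M1 + 2*M1*‖D0‖ + M1*M1*M2) * (Real.log ↑k * ‖y‖) :=
    mul_nonneg (by positivity) (mul_nonneg hL hy)
  have h5 : 0 ≤ M1 * ‖x‖ := by positivity
  have h6 : 0 ≤ M1 * ‖y‖ := by positivity
  have h7 : 0 ≤ 2*M1*‖D0‖*‖x‖ := by positivity
  have h8 : 0 ≤ M1*M1*M2*‖y‖ := by positivity
  have h9 : 0 ≤ M1*M1*M2*‖x‖ := by positivity
  have h10 : 0 ≤ M1*M1*M2*‖D0‖*‖x‖ := by positivity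
  linarith [e, h3, h4, h5, h6, h7, h8, h9, h10]
end

section
/- Let $A_0$ generate a bounded analytic semigroup $T_0$ on $E$ with $0 \in \rho(A_0)$, satisfying $\|A_0 T_0(t)\| \leq M/t$ for $t \in (0,t_{\max}]$; let $S$ be a $C_0$-semigroup on $F$ with generator $B$; let $D_0 : F \to E$ be bounded; and let $\mathbf{T}(\tau)$ be the Lie splitting operator with $V(\tau) = -\tau T_0(\tau)D_0 B S(\tau)$ and $\mathcal{T}(\tau)$ the exact semigroup. Then there exists $C \geq 0$ such that for all $(x,y) \in E \times \mathrm{dom}(B^2)$, $\tau > 0$ and integers $j \geq 1$ with $j\tau \leq t_{\max}$: $\|\mathbf{T}(\tau)^j (\mathcal{T}(\tau) - \mathbf{T}(\tau))(x,y)\| \leq C \tau^2 \|A_0 T_0(j\tau)\| (\|By\| + \|B^2 y\|)$. -/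
open Set MeasureTheory intervalIntegral

/-! The propagator maps `(w, 0)` to `(T₀(τ)w, 0)`, so the `j`-th iterate of the local error
`(z, 0)` is `(T₀(jτ)z, 0) = (A₀T₀(jτ)A₀⁻¹z, 0)` and it suffices to show `‖A₀⁻¹z‖ = O(τ²)`.
Applying `A₀⁻¹` turns `z` into minus the error of the rectangle rule for
`∫₀^τ T₀(τ-s)A₀⁻¹D₀S(s)By ds`, which the quadrature lemma controls.

Nothing makes the Duhamel integrand `T₀(τ-s)D₀S(s)By` measurable, so its integral may be the junk
value `0`. In that case, since `T₀(τ-s) = A₀T₀(τ-θ) T₀(θ-s)A₀⁻¹` for `θ < τ` and the integrand is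
bounded, some quadrature integrand on `[0, θ]` fails to be integrable as well; the quadrature
lemma at scale `θ` then bounds a quadrature node by `O(θ)`, and two quadrature estimates at
scale `τ` pass this bound on to `τT₀(τ)A₀⁻¹D₀S(τ)By`.
-/

open Filter

theorem IntervalIntegrable.of_forall_lt_of_norm_le {E : Type*} [NormedAddCommGroup E]
    [NormedSpace ℝ E] {f : ℝ → E} {a b K : ℝ} (hab : a ≤ b)
    (hf : ∀ c ∈ Ioo a b, IntervalIntegrable f volume a c)
    (hK : ∀ s ∈ Ioc a b, ‖f s‖ ≤ K) : IntervalIntegrable f volume a b := by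
  rcases hab.eq_or_lt with rfl | hab
  · exact .refl
  obtain ⟨c, -, hc, hcb⟩ := exists_seq_strictMono_tendsto' hab
  rw [intervalIntegrable_iff_integrableOn_Ioc_of_le hab.le]
  refine integrableOn_Ioc_of_intervalIntegral_norm_bounded_right (I := K * (b - a))
    (fun n => (intervalIntegrable_iff_integrableOn_Ioc_of_le (hc n).1.le).1 (hf _ (hc n)))
    hcb (Eventually.of_forall fun n => ?_)
  have hsub : Ioc a (c n) ⊆ Ioc a b := Ioc_subset_Ioc_right (hc n).2.le
  calc ∫ x in Ioc a (c n), ‖f x‖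
      ≤ ‖∫ x in Ioc a (c n), ‖f x‖‖ := Real.le_norm_self _
    _ ≤ K * volume.real (Ioc a (c n)) :=
        norm_setIntegral_le_of_norm_le_const measure_Ioc_lt_top
          fun s hs => (norm_norm (f s)).trans_le (hK s (hsub hs))
    _ ≤ K * (b - a) := by
        rw [Real.volume_real_Ioc_of_le (hc n).1.le]
        have := (hc n).2
        exact mul_le_mul_of_nonneg_left (by linarith)
          ((norm_nonneg _).trans (hK b ⟨hab, le_rfl⟩))

theorem norm_le_of_norm_integral_sub_smul_le_of_not_intervalIntegrable {E : Type*}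
    [NormedAddCommGroup E] [NormedSpace ℝ E] {φ : ℝ → E} {θ c : ℝ} {p : E} (hθ : 0 < θ)
    (hφ : ¬ IntervalIntegrable φ volume 0 θ) (h : ‖(∫ s in (0:ℝ)..θ, φ s) - θ • p‖ ≤ c * θ ^ 2) :
    ‖p‖ ≤ c * θ := by
  rw [integral_undef hφ, zero_sub, norm_neg, norm_smul, Real.norm_of_nonneg hθ.le] at h
  nlinarith

section Semigroup

variable {E : Type*} [NormedAddCommGroup E] [NormedSpace ℝ E]
  {T0 AT : ℝ → E →L[ℝ] E} {Ainv : E →L[ℝ] E}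

theorem splitOp_iterate_mk_zero {F : Type*} [NormedAddCommGroup F] [NormedSpace ℝ F]
    {S : ℝ → F →L[ℝ] F} {D0 : F →L[ℝ] E} {B : F →ₗ[ℝ] F} {τ : ℝ} (hT00 : T0 0 = 1)
    (hT0sg : ∀ s t : ℝ, 0 ≤ s → 0 ≤ t → T0 (s + t) = (T0 s).comp (T0 t)) (hτ : 0 ≤ τ)
    (n : ℕ) (w : E) : (splitOp T0 S D0 B τ)^[n] (w, 0) = (T0 (n * τ) w, 0) := by
  induction n with
  | zero => simp [hT00]
  | succ n ih =>
    rw [Function.iterate_succ_apply', ih, Nat.cast_succ, add_one_mul, add_comm,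
      hT0sg τ _ hτ (by positivity)]
    simp [splitOp]

theorem intervalIntegrable_duhamel_of_intervalIntegrable_Ainv
    (hT0sg : ∀ s t : ℝ, 0 ≤ s → 0 ≤ t → T0 (s + t) = (T0 s).comp (T0 t))
    (hAAT : ∀ t : ℝ, 0 < t → ∀ x : E, AT t (Ainv x) = T0 t x)
    (hAinvT0 : ∀ t : ℝ, 0 ≤ t → ∀ x : E, Ainv (T0 t x) = T0 t (Ainv x))
    {w : ℝ → E} {τ θ : ℝ} (hθ : 0 ≤ θ) (hθτ : θ < τ)
    (hg : IntervalIntegrable (fun s => T0 (θ - s) (Ainv (w s))) volume 0 θ) :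
    IntervalIntegrable (fun s => T0 (τ - s) (w s)) volume 0 θ := by
  have hAg : IntervalIntegrable (fun s => AT (τ - θ) (T0 (θ - s) (Ainv (w s)))) volume 0 θ :=
    ⟨(AT (τ - θ)).integrable_comp hg.1, (AT (τ - θ)).integrable_comp hg.2⟩
  refine hAg.congr fun s hs => ?_
  rw [uIoc_of_le hθ] at hs
  have hs' : 0 ≤ θ - s := sub_nonneg.2 hs.2
  rw [← hAinvT0 _ hs', hAAT _ (sub_pos.2 hθτ), ← ContinuousLinearMap.comp_apply,
    ← hT0sg _ _ (sub_pos.2 hθτ).le hs', sub_add_sub_cancel]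

theorem norm_Ainv_duhamel_quadrature_error_le [CompleteSpace E]
    (hT0sg : ∀ s t : ℝ, 0 ≤ s → 0 ≤ t → T0 (s + t) = (T0 s).comp (T0 t))
    (hAAT : ∀ t : ℝ, 0 < t → ∀ x : E, AT t (Ainv x) = T0 t x)
    (hAinvT0 : ∀ t : ℝ, 0 ≤ t → ∀ x : E, Ainv (T0 t x) = T0 t (Ainv x))
    {w : ℝ → E} {τ c K : ℝ} (hτ : 0 < τ) (hc : 0 ≤ c)
    (hK : ∀ s ∈ Ioc 0 τ, ‖T0 (τ - s) (w s)‖ ≤ K)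
    (hquad : ∀ θ ∈ Ioc 0 τ, ∀ s0 ∈ Icc 0 θ, ∀ s1 ∈ Icc 0 θ,
      ‖(∫ s in (0:ℝ)..θ, T0 (θ - s) (Ainv (w s))) - θ • T0 (θ - s0) (Ainv (w s1))‖
        ≤ c * θ ^ 2) :
    ‖Ainv (-(∫ s in (0:ℝ)..τ, T0 (τ - s) (w s)) + τ • T0 τ (w τ))‖ ≤ 3 * c * τ ^ 2 := by
  set I := ∫ s in (0:ℝ)..τ, T0 (τ - s) (Ainv (w s))
  have hτ' : τ ∈ Ioc 0 τ := ⟨hτ, le_rfl⟩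
  have hquad_end := hquad τ hτ' 0 ⟨le_rfl, hτ.le⟩ τ ⟨hτ.le, le_rfl⟩
  rw [sub_zero] at hquad_end
  rw [map_add, map_neg, map_smul, hAinvT0 τ hτ.le]
  by_cases hf : IntervalIntegrable (fun s => T0 (τ - s) (w s)) volume 0 τ
  · have hAinvI : Ainv (∫ s in (0:ℝ)..τ, T0 (τ - s) (w s)) = I := by
      rw [← ContinuousLinearMap.intervalIntegral_comp_comm Ainv hf]
      refine integral_congr fun s hs => ?_
      rw [uIcc_of_le hτ.le] at hs
      exact hAinvT0 _ (sub_nonneg.2 hs.2) _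
    rw [hAinvI, neg_add_eq_sub, norm_sub_rev]
    nlinarith
  obtain ⟨θ, hθ, hg⟩ : ∃ θ ∈ Ioo 0 τ,
      ¬ IntervalIntegrable (fun s => T0 (θ - s) (Ainv (w s))) volume 0 θ := by
    by_contra! hg
    exact hf (IntervalIntegrable.of_forall_lt_of_norm_le hτ.le (fun θ hθ =>
      intervalIntegrable_duhamel_of_intervalIntegrable_Ainv hT0sg hAAT hAinvT0 hθ.1.le hθ.2
        (hg θ hθ)) hK)
  have hnode : ‖T0 θ (Ainv (w 0))‖ ≤ c * θ := by
    refine norm_le_of_norm_integral_sub_smul_le_of_not_intervalIntegrable hθ.1 hg ?_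
    simpa using hquad θ ⟨hθ.1, hθ.2.le⟩ 0 ⟨le_rfl, hθ.1.le⟩ 0 ⟨le_rfl, hθ.1.le⟩
  have hquad_mid := hquad τ hτ' (τ - θ) ⟨by linarith [hθ.2], by linarith [hθ.1]⟩
    0 ⟨le_rfl, hτ.le⟩
  rw [sub_sub_cancel] at hquad_mid
  rw [integral_undef hf, map_zero, neg_zero, zero_add]
  calc ‖τ • T0 τ (Ainv (w τ))‖
      = ‖(I - τ • T0 θ (Ainv (w 0))) - (I - τ • T0 τ (Ainv (w τ))) + τ • T0 θ (Ainv (w 0))‖ := by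
        congr 1; abel
    _ ≤ ‖I - τ • T0 θ (Ainv (w 0))‖ + ‖I - τ • T0 τ (Ainv (w τ))‖
        + ‖τ • T0 θ (Ainv (w 0))‖ := (norm_add_le _ _).trans (by gcongr; exact norm_sub_le _ _)
    _ ≤ c * τ ^ 2 + c * τ ^ 2 + τ * (c * θ) := by
        rw [norm_smul, Real.norm_of_nonneg hτ.le]
        gcongr
    _ ≤ 3 * c * τ ^ 2 := by nlinarith [mul_nonneg (mul_nonneg hc hτ.le) (sub_nonneg.2 hθ.2.le)]

end Semigroup

theorem stmt11_general {E F : Type*} [NormedAddCommGroup E] [NormedSpace ℝ E] [CompleteSpace E]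
    [NormedAddCommGroup F] [NormedSpace ℝ F]
    (T0 : ℝ → E →L[ℝ] E) (S : ℝ → F →L[ℝ] F) (Ainv : E →L[ℝ] E)
    (AT : ℝ → E →L[ℝ] E) (D0 : F →L[ℝ] E)
    (B : F →ₗ[ℝ] F) (domB : Submodule ℝ F) (tmax M : ℝ)
    (hT00 : T0 0 = 1)
    (hT0sg : ∀ s t : ℝ, 0 ≤ s → 0 ≤ t → T0 (s + t) = (T0 s).comp (T0 t))
    (hT0bdd : ∀ t ∈ Icc (0:ℝ) tmax, ‖T0 t‖ ≤ M)
    (hSbdd : ∀ t ∈ Icc (0:ℝ) tmax, ‖S t‖ ≤ M)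
    -- `A₀⁻¹ A₀T₀(t) = T₀(t) = A₀T₀(t) A₀⁻¹`
    (hAAT : ∀ t : ℝ, 0 < t → ∀ x : E, AT t (Ainv x) = T0 t x)
    (hAinvT0 : ∀ t : ℝ, 0 ≤ t → ∀ x : E, Ainv (T0 t x) = T0 t (Ainv x))
    (hcomm : ∀ t : ℝ, 0 ≤ t → ∀ y ∈ domB, B (S t y) = S t (B y))
    -- quadrature lemma (Lemma 3.2), assumed
    (Cq : ℝ) (hCq : 0 ≤ Cq)
    (hquad : ∀ τ ∈ Icc (0:ℝ) tmax, ∀ s0 ∈ Icc (0:ℝ) τ, ∀ s1 ∈ Icc (0:ℝ) τ,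
      ∀ y ∈ domB, B y ∈ domB →
      ‖(∫ s in (0:ℝ)..τ, T0 (τ - s) (Ainv (D0 (S s (B y)))))
          - τ • T0 (τ - s0) (Ainv (D0 (S s1 (B y))))‖
        ≤ Cq * τ ^ 2 * (‖B y‖ + ‖B (B y)‖)) :
    ∃ C ≥ 0, ∀ x : E, ∀ y ∈ domB, B y ∈ domB → ∀ τ : ℝ, 0 < τ → ∀ j : ℕ, 1 ≤ j →
      (j : ℝ) * τ ≤ tmax →
      ‖((splitOp T0 S D0 B τ)^[j]
          ((-∫ ξ in (0:ℝ)..τ, T0 (τ - ξ) (D0 (S ξ (B y))))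
              + τ • T0 τ (D0 (B (S τ y))), (0 : F))).1‖
        + ‖((splitOp T0 S D0 B τ)^[j]
          ((-∫ ξ in (0:ℝ)..τ, T0 (τ - ξ) (D0 (S ξ (B y))))
              + τ • T0 τ (D0 (B (S τ y))), (0 : F))).2‖
        ≤ C * τ ^ 2 * ‖AT ((j : ℝ) * τ)‖ * (‖B y‖ + ‖B (B y)‖) := by
  refine ⟨3 * Cq, by positivity, fun _ y hy hBy τ hτ j hj hjτ => ?_⟩
  have hτtmax : τ ≤ tmax := (le_mul_of_one_le_left hτ.le (by exact_mod_cast hj)).trans hjτ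
  have hM : 0 ≤ M := (norm_nonneg _).trans (hT0bdd 0 ⟨le_rfl, hτ.le.trans hτtmax⟩)
  have hK : ∀ s ∈ Ioc 0 τ,
      ‖T0 (τ - s) (D0 (S s (B y)))‖ ≤ M * (‖D0‖ * (M * ‖B y‖)) := fun s hs => by
    have hT := hT0bdd (τ - s) ⟨sub_nonneg.2 hs.2, by linarith [hs.1]⟩
    have hS := hSbdd s ⟨hs.1.le, hs.2.trans hτtmax⟩
    calc ‖T0 (τ - s) (D0 (S s (B y)))‖ ≤ ‖T0 (τ - s)‖ * (‖D0‖ * (‖S s‖ * ‖B y‖)) := by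
          refine (T0 (τ - s)).le_opNorm_of_le ((D0.le_opNorm _).trans ?_)
          gcongr
          exact (S s).le_opNorm _
      _ ≤ M * (‖D0‖ * (M * ‖B y‖)) := by gcongr
  have hAinv := norm_Ainv_duhamel_quadrature_error_le hT0sg hAAT hAinvT0 hτ
    (by positivity : 0 ≤ Cq * (‖B y‖ + ‖B (B y)‖)) hK fun θ hθ s0 hs0 s1 hs1 =>
      (hquad θ ⟨hθ.1.le, hθ.2.trans hτtmax⟩ s0 hs0 s1 hs1 y hy hBy).trans_eq (by ring)
  rw [hcomm τ hτ.le y hy, splitOp_iterate_mk_zero hT00 hT0sg hτ.le, norm_zero, add_zero,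
    ← hAAT _ (by positivity)]
  calc _ ≤ ‖AT (j * τ)‖ * (3 * (Cq * (‖B y‖ + ‖B (B y)‖)) * τ ^ 2) :=
        (AT _).le_opNorm_of_le hAinv
    _ = 3 * Cq * τ ^ 2 * ‖AT (j * τ)‖ * (‖B y‖ + ‖B (B y)‖) := by ring

/-- Weighted local error estimate for the Lie splitting: with
`A₀` generating the bounded analytic semigroup `T₀` (so `A₀T₀(t)` is bounded for `t > 0`,
represented by `AT t`, with `A₀⁻¹ (A₀T₀(t)) = T₀(t)`), there exists `C ≥ 0` such that for
all `(x,y) ∈ E × dom(B²)`, `τ > 0` and `j ≥ 1` with `jτ ≤ t_max`,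
`‖𝐓(τ)ʲ (𝒯(τ) - 𝐓(τ))(x,y)‖ ≤ C τ² ‖A₀T₀(jτ)‖ (‖By‖ + ‖B²y‖)`, where
`(𝒯(τ) - 𝐓(τ))(x,y) = (Q₀(τ)y - V(τ)y, 0)`. -/
theorem stmt11 {E F : Type*} [NormedAddCommGroup E] [NormedSpace ℝ E] [CompleteSpace E]
    [NormedAddCommGroup F] [NormedSpace ℝ F]
    (T0 : ℝ → E →L[ℝ] E) (S : ℝ → F →L[ℝ] F) (Ainv : E →L[ℝ] E)
    (AT : ℝ → E →L[ℝ] E) (D0 : F →L[ℝ] E)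
    (B : F →ₗ[ℝ] F) (domB : Submodule ℝ F) (tmax M : ℝ) (htmax : 0 < tmax)
    (hT00 : T0 0 = 1)
    (hT0sg : ∀ s t : ℝ, 0 ≤ s → 0 ≤ t → T0 (s + t) = (T0 s).comp (T0 t))
    (hS0 : S 0 = 1)
    (hSsg : ∀ s t : ℝ, 0 ≤ s → 0 ≤ t → S (s + t) = (S s).comp (S t))
    (hT0bdd : ∀ t ∈ Icc (0:ℝ) tmax, ‖T0 t‖ ≤ M)
    (hSbdd : ∀ t ∈ Icc (0:ℝ) tmax, ‖S t‖ ≤ M)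
    -- parabolic smoothing: `‖t A₀ T₀(t)‖ ≤ M`
    (hATsmooth : ∀ t : ℝ, 0 < t → t ≤ tmax → ‖AT t‖ ≤ M / t)
    -- `A₀⁻¹ A₀T₀(t) = T₀(t) = A₀T₀(t) A₀⁻¹`
    (hATA : ∀ t : ℝ, 0 < t → ∀ x : E, Ainv (AT t x) = T0 t x)
    (hAAT : ∀ t : ℝ, 0 < t → ∀ x : E, AT t (Ainv x) = T0 t x)
    (hAinvT0 : ∀ t : ℝ, 0 ≤ t → ∀ x : E, Ainv (T0 t x) = T0 t (Ainv x))
    (hSinv : ∀ t : ℝ, 0 ≤ t → ∀ y ∈ domB, S t y ∈ domB)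
    (hcomm : ∀ t : ℝ, 0 ≤ t → ∀ y ∈ domB, B (S t y) = S t (B y))
    -- quadrature lemma (Lemma 3.2), assumed
    (Cq : ℝ) (hCq : 0 ≤ Cq)
    (hquad : ∀ τ ∈ Icc (0:ℝ) tmax, ∀ s0 ∈ Icc (0:ℝ) τ, ∀ s1 ∈ Icc (0:ℝ) τ,
      ∀ y ∈ domB, B y ∈ domB →
      ‖(∫ s in (0:ℝ)..τ, T0 (τ - s) (Ainv (D0 (S s (B y)))))
          - τ • T0 (τ - s0) (Ainv (D0 (S s1 (B y))))‖
        ≤ Cq * τ ^ 2 * (‖B y‖ + ‖B (B y)‖)) :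
    ∃ C ≥ 0, ∀ x : E, ∀ y ∈ domB, B y ∈ domB → ∀ τ : ℝ, 0 < τ → ∀ j : ℕ, 1 ≤ j →
      (j : ℝ) * τ ≤ tmax →
      ‖((splitOp T0 S D0 B τ)^[j]
          ((-∫ ξ in (0:ℝ)..τ, T0 (τ - ξ) (D0 (S ξ (B y))))
              + τ • T0 τ (D0 (B (S τ y))), (0 : F))).1‖
        + ‖((splitOp T0 S D0 B τ)^[j]
          ((-∫ ξ in (0:ℝ)..τ, T0 (τ - ξ) (D0 (S ξ (B y))))
              + τ • T0 τ (D0 (B (S τ y))), (0 : F))).2‖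
        ≤ C * τ ^ 2 * ‖AT ((j : ℝ) * τ)‖ * (‖B y‖ + ‖B (B y)‖) :=
  stmt11_general T0 S Ainv AT D0 B domB tmax M hT00 hT0sg hT0bdd hSbdd hAAT hAinvT0 hcomm Cq hCq
    hquad
end

section
/- Consider Banach spaces $E$, $F$, linear operators $A_m$ on $E$ with domain $\mathrm{dom}(A_m)$, $L : \mathrm{dom}(A_m) \to F$ surjective, and let $A_0$ be the restriction of $A_m$ to $\ker L$, assumed invertible. Assume $L|_{\ker A_m}$ is invertible with inverse $D_0 : F \to \ker A_m$. Let $B$ generate a $C_0$-semigroup on $F$ and define $\mathcal{A}$ on $\mathrm{dom}(\mathcal{A}) = \{(x,y) \in \mathrm{dom}(A_m) \times \mathrm{dom}(B) : Lx = y\}$ by $\mathcal{A}(x,y) = (A_m x, By)$, and let $\mathcal{R}_0(x,y) = (x - D_0 y, y)$. Then $\mathcal{A}_0 := \mathcal{R}_0 \mathcal{A} \mathcal{R}_0^{-1}$ has diagonal domain $\mathrm{dom}(\mathcal{A}_0) = \mathrm{dom}(A_0) \times \mathrm{dom}(B)$ and is given by $\mathcal{A}_0(x,y) = (A_0 x -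 D_0 B y,\ By)$. -/
/-- Diagonalization of the domain: with `𝒜(x,y) = (A_m x, By)` on
`dom(𝒜) = {(x,y) : x ∈ dom(A_m), y ∈ dom(B), Lx = y}`, `R₀(x,y) = (x - D₀y, y)` and
`R₀⁻¹(x,y) = (x + D₀y, y)`, the operator `𝒜₀ = R₀ 𝒜 R₀⁻¹` has diagonal domain
`dom(A₀) × dom(B)` (where `A₀ = A_m|_{ker L}`), and `𝒜₀(x,y) = (A₀x - D₀By, By)`. -/
theorem stmt12 {E F : Type*} [AddCommGroup E] [Module ℝ E] [AddCommGroup F] [Module ℝ F]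
    (Am : E →ₗ[ℝ] E) (domAm : Submodule ℝ E) (L : E →ₗ[ℝ] F) (B : F →ₗ[ℝ] F)
    (domB : Submodule ℝ F) (D0 : F →ₗ[ℝ] E)
    -- `L : dom(A_m) → F` is surjective
    (hLsurj : ∀ z : F, ∃ x ∈ domAm, L x = z)
    -- `D₀ = (L|_{ker A_m})⁻¹` maps into `ker A_m ∩ dom(A_m)` and is a right inverse of `L`
    (hD0dom : ∀ y : F, D0 y ∈ domAm)
    (hD0ker : ∀ y : F, Am (D0 y) = 0)
    (hLD0 : ∀ y : F, L (D0 y) = y)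
    -- `A₀ = A_m|_{ker L}` is invertible
    (hA0inj : ∀ x ∈ domAm, L x = 0 → Am x = 0 → x = 0)
    (hA0surj : ∀ z : E, ∃ x ∈ domAm, L x = 0 ∧ Am x = z) :
    ∀ (x : E) (y : F),
      -- the domain of `𝒜₀` is diagonal: `R₀⁻¹(x,y) ∈ dom(𝒜)` iff
      -- `x ∈ dom(A₀) = dom(A_m) ∩ ker L` and `y ∈ dom(B)`
      ((x + D0 y ∈ domAm ∧ y ∈ domB ∧ L (x + D0 y) = y)
        ↔ (x ∈ domAm ∧ L x = 0 ∧ y ∈ domB))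
      ∧
      -- on the diagonal domain, `R₀ 𝒜 R₀⁻¹ (x,y) = (A₀ x - D₀ B y, B y)`
      ((x ∈ domAm ∧ L x = 0 ∧ y ∈ domB) →
        (Am (x + D0 y) - D0 (B y), B y) = (Am x - D0 (B y), B y)) := by
  intro x y
  constructor
  · constructor
    · rintro ⟨hmem, hy, hL⟩
      have hx : x ∈ domAm := by
        have := domAm.sub_mem hmem (hD0dom y)
        simpa using this
      refine ⟨hx, ?_, hy⟩
      have : L x + y = y := by simpa [map_add, hLD0] using hL
      exact add_right_cancel (this.trans (zero_add y).symm)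
    · rintro ⟨hx, hLx, hy⟩
      exact ⟨domAm.add_mem hx (hD0dom y), hy, by simp [map_add, hLx, hLD0]⟩
  · rintro ⟨hx, hLx, hy⟩
    simp [map_add, hD0ker]
end

section
/- Let $T_0$ be a bounded analytic semigroup on $E$ with invertible generator $A_0$, satisfying $\|A_0 T_0(t)\| \leq M/t$ for $t > 0$. Let $S$ be a $C_0$-semigroup on $F$ with generator $B$, bounded by $M$ on $[0,t_{\max}]$, and $D_0 : F \to E$ bounded. Then there is $C \geq 0$ such that for every $(x,y) \in E \times \mathrm{dom}(B^2)$, $t,s \in [0,t_{\max}]$, $\tau > 0$ and integer $j$ with $0 < j\tau \leq t_{\max}$: $\|\mathbf{T}(\tau)^j(\mathcal{T}(t) - \mathcal{T}(s))(x,y)\| \leq C|t-s|\,\|A_0 T_0(j\tau)\|\,(\|x\| + \|y\| + \|By\|) + C|t-s|(\|By\| + \|B^2 y\|)$. -/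
open Set MeasureTheory intervalIntegral Filter Topology

/-- The exact semigroup `𝒯(t)(x,y) = (T₀(t)x + Q(t)y, S(t)y)` with
`Q(t)y = -∫₀ᵗ T₀(t-s) D₀ S(s) B y ds + D₀S(t)y - T₀(t)D₀y`. -/
noncomputable def exactSG {E F : Type*} [NormedAddCommGroup E] [NormedSpace ℝ E]
    [CompleteSpace E] [NormedAddCommGroup F] [NormedSpace ℝ F]
    (T0 : ℝ → E →L[ℝ] E) (S : ℝ → F →L[ℝ] F) (D0 : F →L[ℝ] E) (B : F →ₗ[ℝ] F)
    (t : ℝ) : E × F → E × F :=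
  fun p => (T0 t p.1 + (-∫ s in (0:ℝ)..t, T0 (t - s) (D0 (S s (B p.2))))
      + D0 (S t p.2) - T0 t (D0 p.2),
    S t p.2)

lemma iter_split {E F : Type*} [NormedAddCommGroup E] [NormedSpace ℝ E]
    [NormedAddCommGroup F] [NormedSpace ℝ F]
    (T0 : ℝ → E →L[ℝ] E) (S : ℝ → F →L[ℝ] F) (D0 : F →L[ℝ] E) (B : F →ₗ[ℝ] F)
    (τ : ℝ) (hτ : 0 ≤ τ)
    (hT00 : T0 0 = 1)
    (hT0sg : ∀ s t : ℝ, 0 ≤ s → 0 ≤ t → T0 (s + t) = (T0 s).comp (T0 t))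
    (hS0 : S 0 = 1)
    (hSsg : ∀ s t : ℝ, 0 ≤ s → 0 ≤ t → S (s + t) = (S s).comp (S t))
    (p : E × F) (j : ℕ) :
    (splitOp T0 S D0 B τ)^[j] p =
      (T0 ((j:ℝ)*τ) p.1
        + (∑ i ∈ Finset.range j,
            T0 (((j:ℝ)-1-(i:ℝ))*τ) (-(τ • T0 τ (D0 (B (S τ (S ((i:ℝ)*τ) p.2)))))))
        + D0 (S ((j:ℝ)*τ) p.2) - T0 ((j:ℝ)*τ) (D0 p.2),
       S ((j:ℝ)*τ) p.2) := by
  induction j with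
  | zero => simp [hT00, hS0]
  | succ j ih =>
    have hjτ : 0 ≤ (j:ℝ)*τ := by positivity
    have hA : ∀ v : E, T0 τ (T0 ((j:ℝ)*τ) v) = T0 ((↑(j+1):ℝ)*τ) v := by
      intro v
      rw [show ((↑(j+1):ℝ)*τ) = τ + (j:ℝ)*τ by push_cast; ring, hT0sg τ _ hτ hjτ]
      rfl
    have hB : ∀ z : F, S τ (S ((j:ℝ)*τ) z) = S ((↑(j+1):ℝ)*τ) z := by
      intro z
      rw [show ((↑(j+1):ℝ)*τ) = τ + (j:ℝ)*τ by push_cast; ring, hSsg τ _ hτ hjτ]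
      rfl
    have hSum : T0 τ (∑ i ∈ Finset.range j,
          T0 (((j:ℝ)-1-(i:ℝ))*τ) (-(τ • T0 τ (D0 (B (S τ (S ((i:ℝ)*τ) p.2)))))))
        = ∑ i ∈ Finset.range j,
          T0 (((↑(j+1):ℝ)-1-(i:ℝ))*τ) (-(τ • T0 τ (D0 (B (S τ (S ((i:ℝ)*τ) p.2)))))) := by
      rw [map_sum]
      refine Finset.sum_congr rfl fun i hi => ?_
      have hij : (i:ℝ) + 1 ≤ (j:ℝ) := by exact_mod_cast Finset.mem_range.mp hi
      have hnn : 0 ≤ ((j:ℝ)-1-(i:ℝ))*τ := mul_nonneg (by linarith) hτ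
      rw [show ((↑(j+1):ℝ)-1-(i:ℝ))*τ = τ + ((j:ℝ)-1-(i:ℝ))*τ by push_cast; ring,
        hT0sg τ _ hτ hnn]
      rfl
    rw [Function.iterate_succ_apply', ih]
    simp only [splitOp]
    refine Prod.ext ?_ (hB p.2)
    simp only [map_add, map_sub]
    rw [hA p.1, hA (D0 p.2), hSum, Finset.sum_range_succ,
      show ((↑(j+1):ℝ)-1-(j:ℝ))*τ = 0 by push_cast; ring, hT00]
    simp only [ContinuousLinearMap.one_apply]
    rw [hB p.2]
    abel

set_option maxHeartbeats 1000000 in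
/-- Weighted estimate for differences of the exact semigroup:
there is `C ≥ 0` such that for every `(x,y) ∈ E × dom(B²)`, `t,s ∈ [0,t_max]`,
`τ > 0` and integer `j` with `0 < jτ ≤ t_max`,
`‖𝐓(τ)ʲ (𝒯(t) - 𝒯(s))(x,y)‖ ≤ C|t-s| ‖A₀T₀(jτ)‖ (‖x‖+‖y‖+‖By‖) + C|t-s|(‖By‖+‖B²y‖)`. -/
theorem stmt15 {E F : Type*} [NormedAddCommGroup E] [NormedSpace ℝ E] [CompleteSpace E]
    [NormedAddCommGroup F] [NormedSpace ℝ F]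
    (T0 : ℝ → E →L[ℝ] E) (S : ℝ → F →L[ℝ] F) (Ainv : E →L[ℝ] E)
    (AT : ℝ → E →L[ℝ] E) (D0 : F →L[ℝ] E)
    (B : F →ₗ[ℝ] F) (domB : Submodule ℝ F) (tmax M CV CL : ℝ)
    (htmax : 0 < tmax) (hCV : 0 ≤ CV) (hCL : 0 ≤ CL)
    (hT00 : T0 0 = 1)
    (hT0sg : ∀ s t : ℝ, 0 ≤ s → 0 ≤ t → T0 (s + t) = (T0 s).comp (T0 t))
    (hS0 : S 0 = 1)
    (hSsg : ∀ s t : ℝ, 0 ≤ s → 0 ≤ t → S (s + t) = (S s).comp (S t))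
    (hT0bdd : ∀ t ∈ Icc (0:ℝ) tmax, ‖T0 t‖ ≤ M)
    (hSbdd : ∀ t ∈ Icc (0:ℝ) tmax, ‖S t‖ ≤ M)
    -- parabolic smoothing for the analytic semigroup `T₀`
    (hATsmooth : ∀ t : ℝ, 0 < t → t ≤ tmax → ‖AT t‖ ≤ M / t)
    (hATA : ∀ t : ℝ, 0 < t → ∀ x : E, Ainv (AT t x) = T0 t x)
    (hAAT : ∀ t : ℝ, 0 < t → ∀ x : E, AT t (Ainv x) = T0 t x)
    (hAinvT0 : ∀ t : ℝ, 0 ≤ t → ∀ x : E, Ainv (T0 t x) = T0 t (Ainv x))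
    (hSinv : ∀ t : ℝ, 0 ≤ t → ∀ y ∈ domB, S t y ∈ domB)
    (hcomm : ∀ t : ℝ, 0 ≤ t → ∀ y ∈ domB, B (S t y) = S t (B y))
    -- generator relation for `B`
    (hgenB : ∀ y ∈ domB, ∀ t ∈ Icc (0:ℝ) tmax,
      HasDerivAt (fun r : ℝ => S r y) (S t (B y)) t)
    -- the bound `‖V_j(τ)z‖ ≤ CV ‖Bz‖` for the convolution quadrature operator
    (hVj : ∀ τ : ℝ, 0 < τ → ∀ j : ℕ, (j : ℝ) * τ ≤ tmax → ∀ z ∈ domB,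
      ‖∑ i ∈ Finset.range j,
          T0 (((j : ℝ) - 1 - (i : ℝ)) * τ)
            (-(τ • T0 τ (D0 (B (S τ (S ((i : ℝ) * τ) z))))))‖ ≤ CV * ‖B z‖)
    -- Lipschitz estimate for `A₀⁻¹T₀(·)` (Lemma 3.4)
    (hLip1 : ∀ t ∈ Icc (0:ℝ) tmax, ∀ s ∈ Icc (0:ℝ) tmax, ∀ x : E,
      ‖Ainv (T0 t x) - Ainv (T0 s x)‖ ≤ CL * |t - s| * ‖x‖)
    -- Lipschitz estimate for the convolution `T₀ * (A₀⁻¹D₀S(·)By)` (Lemma 3.5)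
    (hLip2 : ∀ y ∈ domB, ∀ t ∈ Icc (0:ℝ) tmax, ∀ s ∈ Icc (0:ℝ) tmax,
      ‖(∫ r in (0:ℝ)..t, T0 (t - r) (Ainv (D0 (S r (B y)))))
          - ∫ r in (0:ℝ)..s, T0 (s - r) (Ainv (D0 (S r (B y))))‖
        ≤ CL * |t - s| * ‖B y‖) :
    ∃ C ≥ 0, ∀ x : E, ∀ y ∈ domB, B y ∈ domB →
      ∀ t ∈ Icc (0:ℝ) tmax, ∀ s ∈ Icc (0:ℝ) tmax, ∀ τ : ℝ, 0 < τ → ∀ j : ℕ,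
      0 < j → (j : ℝ) * τ ≤ tmax →
      ‖((splitOp T0 S D0 B τ)^[j]
          (exactSG T0 S D0 B t (x, y) - exactSG T0 S D0 B s (x, y))).1‖
        + ‖((splitOp T0 S D0 B τ)^[j]
          (exactSG T0 S D0 B t (x, y) - exactSG T0 S D0 B s (x, y))).2‖
        ≤ C * |t - s| * ‖AT ((j : ℝ) * τ)‖ * (‖x‖ + ‖y‖ + ‖B y‖)
          + C * |t - s| * (‖B y‖ + ‖B (B y)‖) := by
  have h0mem : (0:ℝ) ∈ Icc (0:ℝ) tmax := ⟨le_refl 0, htmax.le⟩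
  have hM0 : 0 ≤ M := le_trans (norm_nonneg _) (hSbdd 0 h0mem)
  have hD0n : (0:ℝ) ≤ ‖D0‖ := norm_nonneg _
  have hAinvn : (0:ℝ) ≤ ‖Ainv‖ := norm_nonneg _
  -- Lipschitz estimate for the semigroup S on dom(B)
  have hSLip : ∀ z ∈ domB, ∀ a ∈ Icc (0:ℝ) tmax, ∀ b ∈ Icc (0:ℝ) tmax,
      ‖S a z - S b z‖ ≤ M * ‖B z‖ * |a - b| := by
    intro z hz a ha b hb
    have := Convex.norm_image_sub_le_of_norm_hasDerivWithin_le
      (f := fun r : ℝ => S r z) (f' := fun r : ℝ => S r (B z)) (C := M * ‖B z‖)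
      (fun r hr => (hgenB z hz r hr).hasDerivWithinAt)
      (fun r hr => le_trans ((S r).le_opNorm (B z))
        (mul_le_mul_of_nonneg_right (hSbdd r hr) (norm_nonneg _)))
      (convex_Icc 0 tmax) hb ha
    simpa [Real.norm_eq_abs] using this
  -- representation of T0 away from 0 and the resulting strong continuity
  have hT0rep : ∀ ε : ℝ, 0 < ε → ∀ u : ℝ, ε ≤ u → u ≤ tmax → ∀ z : E,
      T0 u z = Ainv (T0 (u - ε) (AT ε z)) := by
    intro ε hε u hεu hu z
    have h1 : T0 u z = T0 (u - ε) (T0 ε z) := by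
      have h2 : T0 (u - ε + ε) z = T0 (u - ε) (T0 ε z) := by
        rw [hT0sg (u - ε) ε (by linarith) hε.le]; rfl
      rw [show u - ε + ε = u by ring] at h2
      exact h2
    rw [h1, ← hATA ε hε z, ← hAinvT0 (u - ε) (by linarith)]
  have hT0lip : ∀ ε : ℝ, 0 < ε → ∀ u v : ℝ, ε ≤ u → u ≤ tmax → ε ≤ v → v ≤ tmax → ∀ z : E,
      ‖T0 u z - T0 v z‖ ≤ CL * |u - v| * ‖AT ε z‖ := by
    intro ε hε u v hεu hu hεv hv z
    rw [hT0rep ε hε u hεu hu z, hT0rep ε hε v hεv hv z]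
    have := hLip1 (u - ε) ⟨by linarith, by linarith⟩ (v - ε) ⟨by linarith, by linarith⟩ (AT ε z)
    simpa [show u - ε - (v - ε) = u - v by ring] using this
  have hT0cont : ∀ z : E, ∀ u₀ ∈ Ioc (0:ℝ) tmax,
      ContinuousWithinAt (fun u => T0 u z) (Ioc (0:ℝ) tmax) u₀ := by
    intro z u₀ hu₀
    have hε : 0 < u₀/2 := by linarith [hu₀.1]
    have hev : ∀ᶠ u in 𝓝[Ioc (0:ℝ) tmax] u₀, u ∈ Ioc (0:ℝ) tmax ∧ u₀/2 < u := by
      filter_upwards [eventually_mem_nhdsWithin,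
        Filter.Eventually.filter_mono nhdsWithin_le_nhds
          (isOpen_Ioi.eventually_mem (show u₀ ∈ Ioi (u₀/2) by
            simp only [mem_Ioi]; linarith [hu₀.1]))] with u h1 h2
      exact ⟨h1, h2⟩
    have key : Tendsto (fun u => ‖T0 u z - T0 u₀ z‖) (𝓝[Ioc (0:ℝ) tmax] u₀) (𝓝 0) := by
      apply squeeze_zero' (g := fun u => CL * |u - u₀| * ‖AT (u₀/2) z‖)
        (Filter.Eventually.of_forall fun u => norm_nonneg _)
      · filter_upwards [hev] with u hu
        exact hT0lip (u₀/2) hε u u₀ hu.2.le hu.1.2 (by linarith [hu₀.1]) hu₀.2 z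
      · have hc : Continuous fun u : ℝ => CL * |u - u₀| * ‖AT (u₀/2) z‖ :=
          (continuous_const.mul ((continuous_id.sub continuous_const).abs)).mul continuous_const
        have := (hc.tendsto u₀).mono_left (nhdsWithin_le_nhds (s := Ioc (0:ℝ) tmax))
        simpa using this
    exact tendsto_iff_norm_sub_tendsto_zero.mpr key
  refine ⟨(CL + CL*‖D0‖ + ‖Ainv‖*‖D0‖*M) + (CV*M + 2*‖D0‖*M*M + M*M), by positivity, ?_⟩
  intro x y hy hBy t ht s hs τ hτ j hj hjτ
  have hjτ0 : 0 < (j:ℝ) * τ := mul_pos (by exact_mod_cast hj) hτ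
  have hjτIcc : (j:ℝ)*τ ∈ Icc (0:ℝ) tmax := ⟨hjτ0.le, hjτ⟩
  have hd : (0:ℝ) ≤ |t - s| := abs_nonneg _
  have hK : (0:ℝ) ≤ ‖AT ((j:ℝ)*τ)‖ := norm_nonneg _
  -- integrability of the convolution integrand
  have hSBycont : ∀ r₀ ∈ Icc (0:ℝ) tmax, ContinuousAt (fun r : ℝ => D0 (S r (B y))) r₀ :=
    fun r₀ hr₀ => D0.continuous.continuousAt.comp (hgenB (B y) hBy r₀ hr₀).continuousAt
  have hInt : ∀ t' ∈ Icc (0:ℝ) tmax,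
      IntervalIntegrable (fun r => T0 (t' - r) (D0 (S r (B y)))) volume 0 t' := by
    intro t' ht'
    rcases eq_or_lt_of_le ht'.1 with h0 | h0
    · rw [← h0]
    · rw [intervalIntegrable_iff_integrableOn_Ioo_of_le ht'.1]
      have hcont : ContinuousOn (fun r => T0 (t' - r) (D0 (S r (B y)))) (Ioo 0 t') := by
        intro r₀ hr₀
        have hmem : ∀ r ∈ Ioo (0:ℝ) t', t' - r ∈ Ioc (0:ℝ) tmax :=
          fun r hr => ⟨by linarith [hr.2], by linarith [hr.1, ht'.2]⟩
        have hca : ContinuousAt (fun r : ℝ => D0 (S r (B y))) r₀ :=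
          hSBycont r₀ ⟨hr₀.1.le, hr₀.2.le.trans ht'.2⟩
        have key : Tendsto (fun r => ‖T0 (t' - r) (D0 (S r (B y)))
            - T0 (t' - r₀) (D0 (S r₀ (B y)))‖) (𝓝[Ioo (0:ℝ) t'] r₀) (𝓝 0) := by
          apply squeeze_zero' (g := fun r => M * ‖D0 (S r (B y)) - D0 (S r₀ (B y))‖ +
              ‖T0 (t' - r) (D0 (S r₀ (B y))) - T0 (t' - r₀) (D0 (S r₀ (B y)))‖)
            (Filter.Eventually.of_forall fun r => norm_nonneg _)
          · filter_upwards [eventually_mem_nhdsWithin] with r hr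
            have hdecomp : T0 (t' - r) (D0 (S r (B y))) - T0 (t' - r₀) (D0 (S r₀ (B y)))
                = T0 (t' - r) (D0 (S r (B y)) - D0 (S r₀ (B y)))
                  + (T0 (t' - r) (D0 (S r₀ (B y))) - T0 (t' - r₀) (D0 (S r₀ (B y)))) := by
              simp only [map_sub]; abel
            rw [hdecomp]
            refine (norm_add_le _ _).trans (add_le_add ?_ le_rfl)
            refine ((T0 (t'-r)).le_opNorm _).trans ?_
            exact mul_le_mul_of_nonneg_right
              (hT0bdd _ ⟨by linarith [hr.2], by linarith [hr.1, ht'.2]⟩) (norm_nonneg _)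
          · have l1 : Filter.Tendsto (fun r => ‖D0 (S r (B y)) - D0 (S r₀ (B y))‖)
                (nhdsWithin r₀ (Ioo (0:ℝ) t')) (nhds 0) :=
              tendsto_iff_norm_sub_tendsto_zero.mp hca.continuousWithinAt
            have l2' : ContinuousWithinAt (fun r => T0 (t' - r) (D0 (S r₀ (B y))))
                (Ioo (0:ℝ) t') r₀ :=
              (hT0cont (D0 (S r₀ (B y))) (t' - r₀) (hmem r₀ hr₀)).comp
                ((continuous_const.sub continuous_id).continuousWithinAt) hmem
            have l2 := tendsto_iff_norm_sub_tendsto_zero.mp l2'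
            simpa using (l1.const_mul M).add l2
        exact tendsto_iff_norm_sub_tendsto_zero.mpr key
      refine ⟨hcont.aestronglyMeasurable measurableSet_Ioo, ?_⟩
      apply HasFiniteIntegral.restrict_of_bounded (C := M * (‖D0‖ * (M * ‖B y‖)))
        measure_Ioo_lt_top
      filter_upwards [ae_restrict_mem measurableSet_Ioo] with r hr
      calc ‖T0 (t' - r) (D0 (S r (B y)))‖
          ≤ ‖T0 (t' - r)‖ * ‖D0 (S r (B y))‖ := (T0 _).le_opNorm _
        _ ≤ M * (‖D0‖ * (M * ‖B y‖)) := by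
            have h1 : ‖T0 (t'-r)‖ ≤ M :=
              hT0bdd _ ⟨by linarith [hr.2], by linarith [hr.1, ht'.2]⟩
            have h2 : ‖D0 (S r (B y))‖ ≤ ‖D0‖ * (M * ‖B y‖) := by
              refine (D0.le_opNorm _).trans ?_
              refine mul_le_mul_of_nonneg_left ?_ (norm_nonneg _)
              refine ((S r).le_opNorm _).trans ?_
              exact mul_le_mul_of_nonneg_right
                (hSbdd r ⟨hr.1.le, hr.2.le.trans ht'.2⟩) (norm_nonneg _)
            exact mul_le_mul h1 h2 (norm_nonneg _) hM0
  have hAinvInt : ∀ t' ∈ Icc (0:ℝ) tmax,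
      Ainv (∫ r in (0:ℝ)..t', T0 (t' - r) (D0 (S r (B y))))
        = ∫ r in (0:ℝ)..t', T0 (t' - r) (Ainv (D0 (S r (B y)))) := by
    intro t' ht'
    rw [← Ainv.intervalIntegral_comp_comm (hInt t' ht')]
    refine intervalIntegral.integral_congr fun r hr => ?_
    rw [uIcc_of_le ht'.1] at hr
    exact hAinvT0 (t' - r) (by linarith [hr.2]) _
  -- the difference of exact semigroups
  set Δ := exactSG T0 S D0 B t (x, y) - exactSG T0 S D0 B s (x, y) with hΔ
  have hΔ2 : Δ.2 = S t y - S s y := by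
    rw [hΔ, Prod.snd_sub]; simp [exactSG]
  have hΔ1 : Δ.1 = (T0 t x + (-∫ r in (0:ℝ)..t, T0 (t - r) (D0 (S r (B y))))
      + D0 (S t y) - T0 t (D0 y))
      - (T0 s x + (-∫ r in (0:ℝ)..s, T0 (s - r) (D0 (S r (B y))))
      + D0 (S s y) - T0 s (D0 y)) := by
    rw [hΔ, Prod.fst_sub]; simp [exactSG]
  have hiter := iter_split T0 S D0 B τ hτ.le hT00 hT0sg hS0 hSsg Δ j
  have hfst : ((splitOp T0 S D0 B τ)^[j] Δ).1
      = T0 ((j:ℝ)*τ) Δ.1 + (∑ i ∈ Finset.range j,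
          T0 (((j:ℝ)-1-(i:ℝ))*τ) (-(τ • T0 τ (D0 (B (S τ (S ((i:ℝ)*τ) Δ.2)))))))
        + D0 (S ((j:ℝ)*τ) Δ.2) - T0 ((j:ℝ)*τ) (D0 Δ.2) := by rw [hiter]
  have hsnd : ((splitOp T0 S D0 B τ)^[j] Δ).2 = S ((j:ℝ)*τ) Δ.2 := by rw [hiter]
  rw [hfst, hsnd]
  -- basic bounds on Δ
  have hΔ2mem : Δ.2 ∈ domB := by
    rw [hΔ2]; exact Submodule.sub_mem _ (hSinv t ht.1 y hy) (hSinv s hs.1 y hy)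
  have hΔ2n : ‖Δ.2‖ ≤ M * ‖B y‖ * |t - s| := by rw [hΔ2]; exact hSLip y hy t ht s hs
  have hBΔ2 : B Δ.2 = S t (B y) - S s (B y) := by
    rw [hΔ2, map_sub, hcomm t ht.1 y hy, hcomm s hs.1 y hy]
  have hBΔ2n : ‖B Δ.2‖ ≤ M * ‖B (B y)‖ * |t - s| := by
    rw [hBΔ2]; exact hSLip (B y) hBy t ht s hs
  have hVn : ‖∑ i ∈ Finset.range j, T0 (((j:ℝ)-1-(i:ℝ))*τ)
      (-(τ • T0 τ (D0 (B (S τ (S ((i:ℝ)*τ) Δ.2))))))‖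
      ≤ CV * (M * ‖B (B y)‖ * |t - s|) :=
    le_trans (hVj τ hτ j hjτ Δ.2 hΔ2mem) (mul_le_mul_of_nonneg_left hBΔ2n hCV)
  -- the weighted bound on the first term
  have hAp1 : Ainv Δ.1 = ((Ainv (T0 t x) - Ainv (T0 s x))
      - ((∫ r in (0:ℝ)..t, T0 (t - r) (Ainv (D0 (S r (B y)))))
         - ∫ r in (0:ℝ)..s, T0 (s - r) (Ainv (D0 (S r (B y)))))
      + Ainv (D0 Δ.2))
      - (Ainv (T0 t (D0 y)) - Ainv (T0 s (D0 y))) := by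
    rw [hΔ1, hΔ2]
    simp only [map_add, map_sub, map_neg]
    rw [hAinvInt t ht, hAinvInt s hs]
    abel
  have hAp1n : ‖Ainv Δ.1‖
      ≤ (CL + CL*‖D0‖ + ‖Ainv‖*‖D0‖*M) * (|t - s| * (‖x‖ + ‖y‖ + ‖B y‖)) := by
    have e1 : ‖Ainv (T0 t x) - Ainv (T0 s x)‖ ≤ CL * |t - s| * ‖x‖ := hLip1 t ht s hs x
    have e2 := hLip2 y hy t ht s hs
    have e3 : ‖Ainv (D0 Δ.2)‖ ≤ ‖Ainv‖ * (‖D0‖ * (M * ‖B y‖ * |t - s|)) := by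
      refine (Ainv.le_opNorm _).trans ?_
      refine mul_le_mul_of_nonneg_left ?_ (norm_nonneg _)
      refine (D0.le_opNorm _).trans ?_
      exact mul_le_mul_of_nonneg_left hΔ2n (norm_nonneg _)
    have e4 : ‖Ainv (T0 t (D0 y)) - Ainv (T0 s (D0 y))‖ ≤ CL * |t - s| * (‖D0‖ * ‖y‖) := by
      refine (hLip1 t ht s hs (D0 y)).trans ?_
      exact mul_le_mul_of_nonneg_left (D0.le_opNorm y) (by positivity)
    rw [hAp1]
    refine le_trans (norm_sub_le _ _) ?_
    refine le_trans (add_le_add (norm_add_le _ _) le_rfl) ?_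
    refine le_trans (add_le_add (add_le_add (norm_sub_le _ _) le_rfl) le_rfl) ?_
    refine le_trans (add_le_add (add_le_add (add_le_add e1 e2) e3) e4) ?_
    linarith [mul_nonneg (mul_nonneg hCL hd) (norm_nonneg y),
      mul_nonneg (mul_nonneg (mul_nonneg hCL hD0n) hd) (norm_nonneg x),
      mul_nonneg (mul_nonneg (mul_nonneg hCL hD0n) hd) (norm_nonneg (B y)),
      mul_nonneg (mul_nonneg (mul_nonneg (mul_nonneg hAinvn hD0n) hM0) hd) (norm_nonneg x),
      mul_nonneg (mul_nonneg (mul_nonneg (mul_nonneg hAinvn hD0n) hM0) hd) (norm_nonneg y)]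
  have hT0Δ1 : ‖T0 ((j:ℝ)*τ) Δ.1‖ ≤ ‖AT ((j:ℝ)*τ)‖ *
      ((CL + CL*‖D0‖ + ‖Ainv‖*‖D0‖*M) * (|t - s| * (‖x‖ + ‖y‖ + ‖B y‖))) := by
    rw [← hAAT _ hjτ0 Δ.1]
    exact le_trans ((AT _).le_opNorm _) (mul_le_mul_of_nonneg_left hAp1n (norm_nonneg _))
  -- remaining terms
  have hD0Sn : ‖D0 (S ((j:ℝ)*τ) Δ.2)‖ ≤ ‖D0‖ * (M * (M * ‖B y‖ * |t - s|)) := by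
    refine (D0.le_opNorm _).trans (mul_le_mul_of_nonneg_left ?_ (norm_nonneg _))
    refine ((S _).le_opNorm _).trans ?_
    exact mul_le_mul (hSbdd _ hjτIcc) hΔ2n (norm_nonneg _) hM0
  have hT0D0n : ‖T0 ((j:ℝ)*τ) (D0 Δ.2)‖ ≤ M * (‖D0‖ * (M * ‖B y‖ * |t - s|)) := by
    refine ((T0 _).le_opNorm _).trans ?_
    refine mul_le_mul (hT0bdd _ hjτIcc) ?_ (norm_nonneg _) hM0
    exact (D0.le_opNorm _).trans (mul_le_mul_of_nonneg_left hΔ2n (norm_nonneg _))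
  have hSn2 : ‖S ((j:ℝ)*τ) Δ.2‖ ≤ M * (M * ‖B y‖ * |t - s|) := by
    refine ((S _).le_opNorm _).trans ?_
    exact mul_le_mul (hSbdd _ hjτIcc) hΔ2n (norm_nonneg _) hM0
  -- put everything together
  have tri : ‖T0 ((j:ℝ)*τ) Δ.1 + (∑ i ∈ Finset.range j,
          T0 (((j:ℝ)-1-(i:ℝ))*τ) (-(τ • T0 τ (D0 (B (S τ (S ((i:ℝ)*τ) Δ.2)))))))
        + D0 (S ((j:ℝ)*τ) Δ.2) - T0 ((j:ℝ)*τ) (D0 Δ.2)‖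
      ≤ ‖T0 ((j:ℝ)*τ) Δ.1‖ + ‖∑ i ∈ Finset.range j,
          T0 (((j:ℝ)-1-(i:ℝ))*τ) (-(τ • T0 τ (D0 (B (S τ (S ((i:ℝ)*τ) Δ.2))))))‖
        + ‖D0 (S ((j:ℝ)*τ) Δ.2)‖ + ‖T0 ((j:ℝ)*τ) (D0 Δ.2)‖ :=
    le_trans (norm_sub_le _ _) (add_le_add
      (le_trans (norm_add_le _ _) (add_le_add (norm_add_le _ _) le_rfl)) le_rfl)
  have total := add_le_add
    (le_trans tri (add_le_add (add_le_add (add_le_add hT0Δ1 hVn) hD0Sn) hT0D0n)) hSn2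
  refine le_trans total ?_
  linarith [mul_nonneg (mul_nonneg (mul_nonneg
      (by positivity : (0:ℝ) ≤ CV*M + 2*‖D0‖*M*M + M*M) hd) hK)
      (by positivity : (0:ℝ) ≤ ‖x‖ + ‖y‖ + ‖B y‖),
    mul_nonneg (mul_nonneg
      (by positivity : (0:ℝ) ≤ CL + CL*‖D0‖ + ‖Ainv‖*‖D0‖*M) hd)
      (by positivity : (0:ℝ) ≤ ‖B y‖ + ‖B (B y)‖),
    mul_nonneg (mul_nonneg (mul_nonneg hCV hM0) hd) (norm_nonneg (B y)),
    mul_nonneg (mul_nonneg (mul_nonneg (mul_nonneg hD0n hM0) hM0) hd) (norm_nonneg (B (B y))),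
    mul_nonneg (mul_nonneg (mul_nonneg hM0 hM0) hd) (norm_nonneg (B (B y)))]
end
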